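/- The number of perfect matchings of {1,...,2n-2} having exactly k pairs (i,j) with i ∈ {1,...,n} and j ∈ {n+1,...,2n-2} equals C(n,k)·C(n-2,k)·k!·(n-k-1)!!·(n-k-3)!! when n-k is even, and 0 when n-k is odd. -/

import Mathlib

/-!
Split `{1,…,2n-2}` into `A = {1,…,n}` and its complement `B`. A perfect matching with `k`
crossing pairs is the same as: the `k`-sets `S ⊆ A`, `T ⊆ B` of endpoints of crossing pairs, the
bijection `S ≃ T` they define, and perfect matchings of `A \ S` and of `B \ T`. So the count is
`C(|A|,k) C(|B|,k) k! M(|A|-k) M(|B|-k)`, where `M m` is the number of perfect matchings of an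
`m`-set; matching a fixed point with one of the `m - 1` others gives `M m = (m-1) M (m-2)`, i.e.
`M m = (m-1)!!` for even `m` and `0` for odd `m`.

The decomposition rests on two facts: a matching preserving a set is a pair of matchings of the set
and of its complement, and a matching in which every pair crosses between two sides is a bijection
between them. Cut first along the crossing points, then along `A`.
-/

/-- A perfect matching of `{1,…,m}`: a fixed-point free involution. -/
def Matching (m : ℕ) : Type :=
  {π : Equiv.Perm (Fin m) // ∀ i, π i ≠ i ∧ π (π i) = i}

/-- The number of pairs `(i,j)` of the matching with `i ∈ {1,…,n}` and
`j ∈ {n+1,…,2n-2}` (elements of `{1,…,2n-2}` are encoded as `Fin (2n-2)`,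
the element `i` corresponding to the index `i-1`). -/
def crossPairs (n : ℕ) (π : Matching (2 * n - 2)) : ℕ :=
  (Finset.univ.filter (fun i : Fin (2 * n - 2) => i.1 < n ∧ n ≤ (π.1 i).1)).card

open Finset Equiv Nat

abbrev PerfectMatching (α : Type*) : Type _ :=
  {π : Perm α // ∀ x, π x ≠ x ∧ π (π x) = x}

-- At `m = 0` the truncated `(0 - 1)‼ = 0‼ = 1` plays the role of `(-1)‼ = 1`.
def numPerfectMatchings (m : ℕ) : ℕ := if Even m then (m - 1)‼ else 0

theorem numPerfectMatchings_succ (m : ℕ) :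
    numPerfectMatchings (m + 1) = m * numPerfectMatchings (m - 1) := by
  rcases Nat.even_or_odd' m with ⟨t, rfl | rfl⟩
  · rcases t with _ | t
    · simp [numPerfectMatchings]
    · have h : 2 * (t + 1) - 1 = 2 * t + 1 := rfl
      simp [numPerfectMatchings, parity_simps, h]
  · have h : 2 * t + 1 + 1 = 2 * t + 2 := rfl
    simp [numPerfectMatchings, h, Nat.doubleFactorial_add_one, parity_simps]

theorem Nat.card_equiv_eq_ite (X Y : Type*) [Finite X] [Finite Y] :
    Nat.card (X ≃ Y) = if Nat.card X = Nat.card Y then (Nat.card X)! else 0 := by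
  split_ifs with h
  · obtain ⟨e⟩ := Finite.card_eq.mp h
    rw [← Nat.card_perm]
    exact Nat.card_congr (Equiv.equivCongr (Equiv.refl X) e.symm)
  · have : IsEmpty (X ≃ Y) := ⟨fun e => h (Nat.card_congr e)⟩
    exact Nat.card_of_isEmpty

section Finsets

variable {α : Type*} [Fintype α] [DecidableEq α] (p : α → Prop) [DecidablePred p]

theorem card_filter_split_card_eq (i j : ℕ) :
    #{U : Finset α | #{x ∈ U | p x} = i ∧ #{x ∈ U | ¬ p x} = j} =
      (#{x | p x}).choose i * (#{x | ¬ p x}).choose j := by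
  have hsplit {S T : Finset α} (hS : S ⊆ ({x | p x} : Finset α))
      (hT : T ⊆ ({x | ¬ p x} : Finset α)) :
      {x ∈ S ∪ T | p x} = S ∧ {x ∈ S ∪ T | ¬ p x} = T := by
    constructor <;> ext x <;> have := @hS x <;> have := @hT x <;>
      simp only [mem_filter, mem_univ, true_and, mem_union] at * <;> tauto
  rw [← card_powersetCard, ← card_powersetCard, ← card_product]
  refine card_nbij' (fun U => ({x ∈ U | p x}, {x ∈ U | ¬ p x})) (fun ST => ST.1 ∪ ST.2)
    ?_ ?_ (fun U _ => filter_union_filter_not_eq _ _) ?_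
  · intro U hU
    simp only [coe_filter, Set.mem_ofPred_eq, mem_univ, true_and] at hU
    simp [mem_powersetCard, hU, subset_iff]
  · rintro ⟨S, T⟩ hST
    simp only [coe_product, Set.mem_prod, mem_coe, mem_powersetCard] at hST
    simp [hsplit hST.1.1 hST.2.1, hST]
  · rintro ⟨S, T⟩ hST
    simp only [coe_product, Set.mem_prod, mem_coe, mem_powersetCard] at hST
    simp [hsplit hST.1.1 hST.2.1]

theorem card_filter_notMem_and (U : Finset α) :
    #{x | x ∉ U ∧ p x} = #{x | p x} - #{x ∈ U | p x} := by
  rw [← card_sdiff_of_subset (by intro x; simp +contextual)]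
  congr 1
  ext x
  simp only [mem_filter, mem_univ, true_and, mem_sdiff]
  tauto

end Finsets

namespace PerfectMatching

variable {α β : Type*}

def restrict (π : PerfectMatching α) (q : α → Prop) (h : ∀ x, q (π.1 x) ↔ q x) :
    PerfectMatching {x // q x} :=
  ⟨π.1.subtypePerm h, fun x => ⟨fun hx => (π.2 x).1 (congrArg Subtype.val hx),
    Subtype.ext (π.2 x).2⟩⟩

def subtypeCongr {q : α → Prop} [DecidablePred q] (σ : PerfectMatching {x // q x})
    (τ : PerfectMatching {x // ¬ q x}) : PerfectMatching α :=
  ⟨σ.1.subtypeCongr τ.1, fun x => by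
    by_cases hx : q x
    · simp only [Perm.subtypeCongr.left_apply _ _ hx, Perm.subtypeCongr.left_apply_subtype,
        (σ.2 _).2]
      exact ⟨fun h => (σ.2 _).1 (Subtype.ext h), trivial⟩
    · simp only [Perm.subtypeCongr.right_apply _ _ hx, Perm.subtypeCongr.right_apply_subtype,
        (τ.2 _).2]
      exact ⟨fun h => (τ.2 _).1 (Subtype.ext h), trivial⟩⟩

def preservingEquivProd (q : α → Prop) [DecidablePred q] :
    {π : PerfectMatching α // ∀ x, q (π.1 x) ↔ q x} ≃
      PerfectMatching {x // q x} × PerfectMatching {x // ¬ q x} where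
  toFun π := (π.1.restrict q π.2, π.1.restrict (¬ q ·) fun x => not_congr (π.2 x))
  invFun στ := ⟨subtypeCongr στ.1 στ.2, fun x => by
    by_cases hx : q x <;> simp [subtypeCongr, hx, (στ.1.1 _).2, (στ.2.1 _).2]⟩
  left_inv π := by
    ext x
    by_cases hx : q x <;> simp [subtypeCongr, restrict, hx]
  right_inv στ := by
    ext x <;> simp [subtypeCongr, restrict, x.2]

def swapSides {q : α → Prop} [DecidablePred q] (g : {x // q x} ≃ {x // ¬ q x}) (x : α) : α :=
  if h : q x then g ⟨x, h⟩ else g.symm ⟨x, h⟩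

theorem pred_swapSides_iff {q : α → Prop} [DecidablePred q] (g : {x // q x} ≃ {x // ¬ q x})
    (x : α) : q (swapSides g x) ↔ ¬ q x := by
  by_cases h : q x <;> simp [swapSides, h, (g _).2, (g.symm _).2]

theorem swapSides_involutive {q : α → Prop} [DecidablePred q] (g : {x // q x} ≃ {x // ¬ q x}) :
    Function.Involutive (swapSides g) := by
  intro x
  by_cases h : q x <;> simp [swapSides, h, (g _).2, (g.symm _).2]

def bipartiteEquiv (q : α → Prop) [DecidablePred q] :
    {π : PerfectMatching α // ∀ x, q (π.1 x) ↔ ¬ q x} ≃ ({x // q x} ≃ {x // ¬ q x}) where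
  toFun π :=
    { toFun x := ⟨π.1.1 x, fun h => (π.2 x).1 h x.2⟩
      invFun y := ⟨π.1.1 y, (π.2 y).2 y.2⟩
      left_inv x := Subtype.ext (π.1.2 x).2
      right_inv y := Subtype.ext (π.1.2 y).2 }
  invFun g := ⟨⟨(swapSides_involutive g).toPerm, fun x =>
      ⟨fun h => by simpa [show swapSides g x = x from h] using pred_swapSides_iff g x,
        swapSides_involutive g x⟩⟩,
    pred_swapSides_iff g⟩
  left_inv π := by
    ext x
    by_cases hx : q x <;> simp [swapSides, hx]
  right_inv g := by
    ext x
    simp [swapSides, x.2]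

theorem crossing_iff_invariant (π : PerfectMatching α) (u p : α → Prop) :
    (∀ x, u x ↔ ¬(p (π.1 x) ↔ p x)) ↔
      ∃ _ : ∀ x, u (π.1 x) ↔ u x,
        (∀ x : {x // u x}, p (π.1 x) ↔ ¬ p x) ∧ (∀ x : {x // ¬ u x}, p (π.1 x) ↔ p x) := by
  constructor
  · intro hu
    refine ⟨fun x => ?_, fun x => by have := (hu x).1 x.2; tauto,
      fun x => by have := (hu x).not.1 x.2; tauto⟩
    rw [hu, hu, (π.2 x).2]
    tauto
  · rintro ⟨-, hcross, hstay⟩ x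
    by_cases hx : u x
    · have := hcross ⟨x, hx⟩; tauto
    · have := hstay ⟨x, hx⟩; tauto

def crossingEquiv (u p : α → Prop) [DecidablePred u] [DecidablePred p] :
    {π : PerfectMatching α // ∀ x, u x ↔ ¬(p (π.1 x) ↔ p x)} ≃
      ({x : {x // u x} // p x} ≃ {x : {x // u x} // ¬ p x}) ×
        PerfectMatching {x : {x // ¬ u x} // p x} × PerfectMatching {x : {x // ¬ u x} // ¬ p x} :=
  (subtypeEquivRight fun π => crossing_iff_invariant π u p).trans <|
    (subtypeSubtypeEquivSubtypeExists _ _).symm.trans <|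
      ((preservingEquivProd u).subtypeEquiv
        (q := fun στ => (∀ x : {x // u x}, p (στ.1.1 x) ↔ ¬ p x) ∧
          (∀ x : {x // ¬ u x}, p (στ.2.1 x) ↔ p x))
        fun _ => Iff.rfl).trans <|
        subtypeProdEquivProd.trans <|
          prodCongr (bipartiteEquiv fun x : {x // u x} => p x)
            (preservingEquivProd fun x : {x // ¬ u x} => p x)

def congr (e : α ≃ β) : PerfectMatching α ≃ PerfectMatching β :=
  e.permCongr.subtypeEquiv fun π => by
    simp [Equiv.permCongr_apply, e.surjective.forall]

theorem card_of_isEmpty [IsEmpty α] : Nat.card (PerfectMatching α) = 1 :=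
  @Nat.card_unique _ ⟨⟨1, isEmptyElim⟩⟩ ⟨fun _ _ => Subtype.ext (Subsingleton.elim _ _)⟩

theorem card_apply_eq_of_ne [Finite α] {a b : α} (hab : a ≠ b) :
    Nat.card {π : PerfectMatching α // π.1 a = b} =
      Nat.card (PerfectMatching {x // x ≠ a ∧ x ≠ b}) := by
  classical
  -- For `p = (· = a)` the crossing points of `π` are exactly `a` and `π a`.
  have hcross (π : PerfectMatching α) :
      π.1 a = b ↔ ∀ x, (x = a ∨ x = b) ↔ ¬(π.1 x = a ↔ x = a) := by
    have hπ : ∀ x, π.1 x = a ↔ x = π.1 a := fun x => by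
      rw [← (π.2 a).2, π.1.injective.eq_iff, (π.2 a).2]
    simp only [hπ]
    constructor
    · rintro rfl x
      have := (π.2 a).1
      by_cases hx : x = a <;> simp_all [eq_comm]
    · intro h
      simpa [hab.symm, eq_comm] using h b
  have hleft : Nat.card {x : {x // x = a ∨ x = b} // x.1 = a} = 1 :=
    Nat.card_eq_one_iff_unique.mpr ⟨⟨fun x y => by ext; rw [x.2, y.2]⟩, ⟨⟨⟨a, .inl rfl⟩, rfl⟩⟩⟩
  have hright : Nat.card {x : {x // x = a ∨ x = b} // x.1 ≠ a} = 1 :=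
    Nat.card_eq_one_iff_unique.mpr ⟨⟨fun x y => by ext; rw [x.1.2.resolve_left x.2,
      y.1.2.resolve_left y.2]⟩, ⟨⟨⟨b, .inr rfl⟩, hab.symm⟩⟩⟩
  have : IsEmpty {x : {x // ¬(x = a ∨ x = b)} // x.1 = a} := ⟨fun x => x.1.2 (.inl x.2)⟩
  rw [Nat.card_congr ((subtypeEquivRight hcross).trans
      (crossingEquiv (fun x => x = a ∨ x = b) (· = a))), Nat.card_prod, Nat.card_prod,
    Nat.card_equiv_eq_ite, hleft, hright, card_of_isEmpty]
  simp only [factorial_one, one_mul, if_true]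
  exact Nat.card_congr (congr ((subtypeSubtypeEquivSubtypeInter (fun x => ¬(x = a ∨ x = b))
    (· ≠ a)).trans (subtypeEquivRight (q := fun x => x ≠ a ∧ x ≠ b) fun x => by tauto)))

theorem card_eq_numPerfectMatchings [Finite α] :
    Nat.card (PerfectMatching α) = numPerfectMatchings (Nat.card α) := by
  induction h : Nat.card α using Nat.strong_induction_on generalizing α with
  | _ m ih =>
  rcases isEmpty_or_nonempty α with hα | hα
  · rw [card_of_isEmpty, ← h, Nat.card_of_isEmpty]
    rfl
  obtain ⟨a⟩ := id hα
  classical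
  have := Fintype.ofFinite α
  have hm : 0 < m := h ▸ Nat.card_pos
  have hfiber (b : {b // b ≠ a}) :
      Nat.card {π : PerfectMatching α // π.1 a = b} = numPerfectMatchings (m - 2) := by
    rw [card_apply_eq_of_ne b.2.symm]
    refine ih _ (by omega) ?_
    rw [← h, Nat.card_eq_fintype_card, Nat.card_eq_fintype_card, Fintype.card_subtype]
    simp only [ne_eq, filter_and, filter_ne', erase_inter, univ_inter]
    rw [card_erase_of_mem (mem_erase.mpr ⟨b.2.symm, mem_univ _⟩), card_erase_of_mem (mem_univ _),
      Finset.card_univ]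
    omega
  have E : PerfectMatching α ≃ Σ b : {b // b ≠ a}, {π : PerfectMatching α // π.1 a = b} :=
    (sigmaFiberEquiv fun π : PerfectMatching α => (⟨π.1 a, (π.2 a).1⟩ : {b // b ≠ a})).symm.trans
      (sigmaCongrRight fun b => subtypeEquivRight fun π => Subtype.ext_iff)
  rw [Nat.card_congr E, Nat.card_sigma, Finset.sum_congr rfl fun b _ => hfiber b,
    Finset.sum_const, Finset.card_univ, smul_eq_mul, Fintype.card_subtype_compl,
    Fintype.card_subtype_eq, ← Nat.card_eq_fintype_card, h, show m = m - 1 + 1 by omega,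
    numPerfectMatchings_succ]
  rfl

section Crossing

variable [Fintype α] [DecidableEq α] (p : α → Prop) [DecidablePred p]

def crossing (π : PerfectMatching α) : Finset α := {x | ¬(p (π.1 x) ↔ p x)}

theorem card_crossing_eq (U : Finset α) :
    Nat.card {π : PerfectMatching α // crossing p π = U} =
      (if #{x ∈ U | p x} = #{x ∈ U | ¬ p x} then (#{x ∈ U | p x})! else 0) *
        numPerfectMatchings (#{x | p x} - #{x ∈ U | p x}) *
        numPerfectMatchings (#{x | ¬ p x} - #{x ∈ U | ¬ p x}) := by
  have hcard (u q : α → Prop) [DecidablePred u] [DecidablePred q] :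
      Nat.card {x : {x // u x} // q x} = #{x | u x ∧ q x} := by
    rw [Nat.card_congr (subtypeSubtypeEquivSubtypeInter u q), Nat.card_eq_fintype_card,
      Fintype.card_subtype]
  have hmem (q : α → Prop) [DecidablePred q] : #{x | x ∈ U ∧ q x} = #{x ∈ U | q x} := by
    rw [← filter_filter, filter_mem_eq_inter, univ_inter]
  have hfiber (π : PerfectMatching α) : crossing p π = U ↔ ∀ x, x ∈ U ↔ ¬(p (π.1 x) ↔ p x) := by
    simp only [crossing, Finset.ext_iff, mem_filter, mem_univ, true_and]
    exact forall_congr' fun _ => iff_comm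
  rw [Nat.card_congr ((subtypeEquivRight hfiber).trans (crossingEquiv (· ∈ U) p)), Nat.card_prod,
    Nat.card_prod, Nat.card_equiv_eq_ite, card_eq_numPerfectMatchings,
    card_eq_numPerfectMatchings, hcard (· ∈ U) p, hcard (· ∈ U) (¬ p ·), hcard (· ∉ U) p,
    hcard (· ∉ U) (¬ p ·), card_filter_notMem_and, card_filter_notMem_and (¬ p ·), hmem, hmem,
    mul_assoc]

theorem card_crossPairs_eq (k : ℕ) :
    Nat.card {π : PerfectMatching α // #{x | p x ∧ ¬ p (π.1 x)} = k} =
      (#{x | p x}).choose k * (#{x | ¬ p x}).choose k * k ! *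
        numPerfectMatchings (#{x | p x} - k) * numPerfectMatchings (#{x | ¬ p x} - k) := by
  have hcross (π : PerfectMatching α) : #{x | p x ∧ ¬ p (π.1 x)} = #{x ∈ crossing p π | p x} := by
    congr 1
    ext x
    simp only [crossing, mem_filter, mem_univ, true_and]
    tauto
  have hfiber (U : Finset α) :
      #{π : PerfectMatching α | #{x | p x ∧ ¬ p (π.1 x)} = k ∧ crossing p π = U} =
        if #{x ∈ U | p x} = k ∧ #{x ∈ U | ¬ p x} = k then
          k ! * numPerfectMatchings (#{x | p x} - k) * numPerfectMatchings (#{x | ¬ p x} - k)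
        else 0 := by
    by_cases hk : #{x ∈ U | p x} = k
    · rw [filter_congr fun π _ => and_iff_right_of_imp fun h => by rw [hcross, h, hk],
        ← Fintype.card_subtype, ← Nat.card_eq_fintype_card, card_crossing_eq, hk]
      by_cases hk' : #{x ∈ U | ¬ p x} = k
      · simp [hk']
      · simp [hk', Ne.symm hk']
    · rw [if_neg fun h => hk h.1, Finset.card_eq_zero, filter_eq_empty_iff]
      rintro π - ⟨h, rfl⟩
      exact hk (hcross π ▸ h)
  rw [Nat.card_eq_fintype_card, Fintype.card_subtype,
    card_eq_sum_card_fiberwise (f := crossing p) (t := univ) (by simp)]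
  simp only [filter_filter, hfiber]
  rw [sum_ite, sum_const_zero, add_zero, sum_const, smul_eq_mul,
    card_filter_split_card_eq]
  ring

end Crossing

end PerfectMatching

/-- The number of perfect matchings of `{1,…,2n-2}` with exactly `k` pairs `(i,j)`,
`i ∈ {1,…,n}`, `j ∈ {n+1,…,2n-2}`, equals `C(n,k)·C(n-2,k)·k!·(n-k-1)!!·(n-k-3)!!`
when `n-k` is even, and `0` when `n-k` is odd. -/
theorem matching_crossPairs_count (n k : ℕ) (hn : 2 ≤ n) :
    Nat.card {π : Matching (2 * n - 2) // crossPairs n π = k} =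
      if Even (n - k) then
        n.choose k * (n - 2).choose k * k.factorial *
          Nat.doubleFactorial (n - k - 1) * Nat.doubleFactorial (n - k - 3)
      else 0 := by
  have hA : #{i : Fin (2 * n - 2) | i.1 < n} = n := by
    rw [Fin.card_filter_val_lt]
    omega
  have hB : #{i : Fin (2 * n - 2) | ¬ i.1 < n} = n - 2 := by
    rw [filter_not, card_sdiff_of_subset (filter_subset _ _), hA, Finset.card_univ,
      Fintype.card_fin]
    omega
  have hcross (π : PerfectMatching (Fin (2 * n - 2))) :
      crossPairs n π = #{i | i.1 < n ∧ ¬ (π.1 i).1 < n} := by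
    simp only [crossPairs, not_lt]
  change Nat.card {π : PerfectMatching (Fin (2 * n - 2)) // crossPairs n π = k} = _
  rw [Nat.card_congr (subtypeEquivRight fun π => by rw [hcross]),
    PerfectMatching.card_crossPairs_eq (fun i : Fin (2 * n - 2) => i.1 < n), hA, hB]
  rcases le_or_gt k (n - 2) with hk | hk
  · have hpar : Even (n - 2 - k) ↔ Even (n - k) := by
      rw [show n - k = n - 2 - k + 2 by omega]
      simp [parity_simps]
    simp only [numPerfectMatchings, hpar, show n - 2 - k - 1 = n - k - 3 by omega]
    split_ifs <;> ring
  · simp [Nat.choose_eq_zero_of_lt hk]
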